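/- Let G = (√5+1)/2 and h(x) be the invariant density at α = G: h(x) = (3 log G)^{−1}/(x+G+1) for x ∈ [G−2, (1−G)/G) and h(x) = (3 log G)^{−1}/(x+1) for x ∈ [(1−G)/G, G) (note (α−1)/(2−α) = G when α = G, so the third piece is empty). Then ∫_{G−2}^{G} log|x| · h(x) dx = −π²/(18 log G). -/

import Mathlib

/-!
On `[G - 2, G]` the density is `(3 log G)⁻¹ / (1 + x)`, because `(1 - G) / G = G - 2`. With
`K a = ∫₀ᵃ log t / (1 - t) dt`, the integral of `log |x| / (1 + x)` over `[-c, 0]` is `K c`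
(reflect `x ↦ -x`) and over `[0, b]` it is `K (b / (1 + b)) + log² (1 + b) / 2` (substitute
`x = u / (1 - u)`). For `b = G` we have `b / (1 + b) = 1 / G` and `G - 2 = -1 / G²`, so
the integral is `K (1 / G) + K (1 / G²) + 2 log² G`. Euler's reflection formula
`K a + K (1 - a) + log a log (1 - a) = K 1 = -ζ(2)` at `a = 1 / G` turns this into `-π² / 6`,
the logarithmic terms cancelling.
-/

/-- The invariant density at α = G (note (α−1)/(2−α) = G at α = G, so the
third piece of the density is empty). -/
noncomputable def hG (x : ℝ) : ℝ :=
  let G : ℝ := (Real.sqrt 5 + 1)/2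
  (3 * Real.log G)⁻¹ * (if x < (1-G)/G then 1/(x+G+1) else 1/(x+1))

open Real MeasureTheory intervalIntegral Set Filter Topology

lemma eq_of_hasDerivAt_zero_of_continuousOn {f : ℝ → ℝ} {a b : ℝ} (hab : a ≤ b)
    (hf : ContinuousOn f (Icc a b)) (hf' : ∀ x ∈ Ioo a b, HasDerivAt f 0 x) : f b = f a := by
  rcases hab.eq_or_lt with rfl | hlt
  · rfl
  obtain ⟨c, -, hc⟩ := exists_hasDerivAt_eq_slope f (fun _ ↦ 0) hlt hf hf'
  rw [eq_comm, div_eq_zero_iff, sub_eq_zero, sub_eq_zero] at hc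
  exact hc.resolve_right hlt.ne'

lemma integral_pow_mul_neg_log (n : ℕ) :
    ∫ t in (0:ℝ)..1, t ^ n * -log t = 1 / ((n : ℝ) + 1) ^ 2 := by
  -- `t ^ (n + 1) log t` written as `t ^ n (t log t)`, so that it is visibly continuous at `0`
  let A : ℝ → ℝ := fun t ↦
    t ^ (n + 1) / ((n : ℝ) + 1) ^ 2 - t ^ n * (t * log t) / ((n : ℝ) + 1)
  have hAcont : Continuous A :=
    ((continuous_pow _).div_const _).sub (((continuous_pow n).mul continuous_mul_log).div_const _)
  have hA : ∀ t ∈ Ioo (0:ℝ) 1, HasDerivAt A (t ^ n * -log t) t := by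
    intro t ht
    have hpow : ∀ k : ℕ, HasDerivAt (fun t : ℝ ↦ t ^ k) (k * t ^ (k - 1)) t :=
      fun k ↦ hasDerivAt_pow k t
    refine ((hpow (n + 1)).div_const _ |>.sub
      ((hpow n).mul (hasDerivAt_mul_log ht.1.ne') |>.div_const _)).congr_deriv ?_
    rcases n with _ | n
    · simp
    · simp only [Nat.add_sub_cancel, pow_succ]
      push_cast
      field_simp
      ring
  rw [integral_eq_sub_of_hasDerivAt_of_le zero_le_one hAcont.continuousOn hA
    (intervalIntegrable_log'.neg.continuousOn_mul (by fun_prop))]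
  simp [A]

lemma norm_log_div_one_sub_le {t : ℝ} (ht : t ∈ Ioc 0 1) :
    ‖log t / (1 - t)‖ ≤ 2 * ‖log t‖ + 2 := by
  obtain ⟨ht0, ht1⟩ := ht
  have hlog : log t ≤ 0 := log_nonpos ht0.le ht1
  simp only [norm_div, Real.norm_eq_abs, abs_of_nonpos hlog]
  rcases ht1.eq_or_lt with rfl | ht1
  · simp
  rw [abs_of_pos (sub_pos.2 ht1), div_le_iff₀ (sub_pos.2 ht1)]
  rcases le_or_gt t (1 / 2) with hhalf | hhalf
  · nlinarith
  · -- `-log t ≤ t⁻¹ - 1 = (1 - t) / t` and `t⁻¹ < 2`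
    have h := one_sub_inv_le_log_of_pos ht0
    have hinv : t⁻¹ < 2 := by rw [inv_lt_comm₀ ht0 two_pos]; linarith
    have hsplit : t⁻¹ - 1 = (1 - t) * t⁻¹ := by field_simp
    nlinarith [mul_le_mul_of_nonneg_left hinv.le (sub_pos.2 ht1).le]

lemma intervalIntegrable_log_div_one_sub :
    IntervalIntegrable (fun t ↦ log t / (1 - t)) volume 0 1 := by
  have hmeas : Measurable fun t : ℝ ↦ log t / (1 - t) := by fun_prop
  refine ((intervalIntegrable_log'.norm.const_mul 2).add
    (intervalIntegrable_const (c := 2))).mono_fun hmeas.aestronglyMeasurable ?_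
  rw [uIoc_of_le zero_le_one]
  filter_upwards [ae_restrict_mem measurableSet_Ioc] with t ht
  exact (norm_log_div_one_sub_le ht).trans (le_abs_self _)

lemma continuousAt_log_mul_log_one_sub : ContinuousAt (fun a ↦ log a * log (1 - a)) 0 := by
  have hbound : ∀ a : ℝ, |a| ≤ 1 / 2 → ‖log a * log (1 - a)‖ ≤ 2 * |a * log a| := by
    intro a ha
    have h1a : 1 / 2 ≤ 1 - a := by linarith [le_abs_self a]
    have hupper : log (1 - a) ≤ |a| := by
      linarith [log_le_sub_one_of_pos (by linarith : 0 < 1 - a), neg_le_abs a]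
    have hlower : -(2 * |a|) ≤ log (1 - a) := by
      have h := one_sub_inv_le_log_of_pos (by linarith : 0 < 1 - a)
      have : 1 - (1 - a)⁻¹ = -(a / (1 - a)) := by field_simp; ring
      rw [this] at h
      have : a / (1 - a) ≤ 2 * |a| := by
        rw [div_le_iff₀ (by linarith)]
        nlinarith [le_abs_self a, abs_nonneg a]
      linarith
    have hlog1 : |log (1 - a)| ≤ 2 * |a| := abs_le.2 ⟨hlower, by linarith [abs_nonneg a]⟩
    calc ‖log a * log (1 - a)‖ = |log a| * |log (1 - a)| := by rw [Real.norm_eq_abs, abs_mul]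
      _ ≤ |log a| * (2 * |a|) := by gcongr
      _ = 2 * |a * log a| := by rw [abs_mul]; ring
  have hlim : Tendsto (fun a : ℝ ↦ 2 * |a * log a|) (𝓝 0) (𝓝 0) := by
    simpa using ((continuous_mul_log.abs.const_mul 2).tendsto 0)
  rw [ContinuousAt, log_zero, zero_mul]
  refine squeeze_zero_norm' ?_ hlim
  filter_upwards [Metric.closedBall_mem_nhds 0 (by norm_num : (0:ℝ) < 1 / 2)] with a ha
  exact hbound a (by simpa using ha)

lemma intervalIntegrable_log_div_one_add {a b : ℝ} (ha : -1 < a) (hb : -1 < b) :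
    IntervalIntegrable (fun x ↦ log x / (1 + x)) volume a b := by
  simp only [div_eq_mul_inv]
  refine intervalIntegrable_log'.mul_continuousOn (ContinuousOn.inv₀ (by fun_prop) ?_)
  intro x hx
  have : -1 < x := (lt_min ha hb).trans_le hx.1
  linarith

namespace Dilog

/-- `K a = Li₂ (1 - a) - π² / 6`, where `Li₂` is the dilogarithm. -/
noncomputable def K (a : ℝ) : ℝ := ∫ t in (0:ℝ)..a, log t / (1 - t)

lemma K_zero : K 0 = 0 := integral_same

lemma continuousOn_K : ContinuousOn K (Icc 0 1) := by
  have h := continuousOn_primitive_interval' intervalIntegrable_log_div_one_sub left_mem_uIcc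
  rwa [uIcc_of_le zero_le_one] at h

lemma hasDerivAt_K {a : ℝ} (ha : a ∈ Ioo 0 1) : HasDerivAt K (log a / (1 - a)) a := by
  have hint : IntervalIntegrable (fun t ↦ log t / (1 - t)) volume 0 a :=
    intervalIntegrable_log_div_one_sub.mono_set (by
      rw [uIcc_of_le ha.1.le, uIcc_of_le zero_le_one]
      exact Icc_subset_Icc_right ha.2.le)
  have hmeas : Measurable fun t : ℝ ↦ log t / (1 - t) := by fun_prop
  refine integral_hasDerivAt_right hint hmeas.aestronglyMeasurable.stronglyMeasurableAtFilter ?_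
  exact (continuousAt_log ha.1.ne').div (by fun_prop) (sub_pos.2 ha.2).ne'

lemma K_one : K 1 = -(π ^ 2 / 6) := by
  let μ := volume.restrict (Ioc (0:ℝ) 1)
  have hint : ∀ n : ℕ, Integrable (fun t : ℝ ↦ t ^ n * -log t) μ := fun n ↦
    (intervalIntegrable_iff_integrableOn_Ioc_of_le zero_le_one).1
      (intervalIntegrable_log'.neg.continuousOn_mul (by fun_prop))
  have hterm : ∀ n : ℕ, ∫ t, t ^ n * -log t ∂μ = 1 / ((n : ℝ) + 1) ^ 2 := fun n ↦ by
    rw [← integral_pow_mul_neg_log n, integral_of_le zero_le_one]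
  have hnorm : ∀ n : ℕ, ∫ t, ‖t ^ n * -log t‖ ∂μ = ∫ t, t ^ n * -log t ∂μ :=
    fun n ↦ setIntegral_congr_fun measurableSet_Ioc fun t ht ↦ Real.norm_of_nonneg
      (mul_nonneg (pow_nonneg ht.1.le n) (neg_nonneg.2 (log_nonpos ht.1.le ht.2)))
  -- `∑ 1 / (n + 1)² = ζ(2)`, the `n = 0` term of `hasSum_zeta_two` being `1 / 0 = 0`
  have hzeta : HasSum (fun n : ℕ ↦ 1 / ((n : ℝ) + 1) ^ 2) (π ^ 2 / 6) := by
    have h := (hasSum_nat_add_iff (f := fun n : ℕ ↦ 1 / (n : ℝ) ^ 2) 1).2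
      (by simpa using hasSum_zeta_two)
    push_cast at h
    exact h
  have hsum := integral_tsum_of_summable_integral_norm hint
    (by simpa only [hnorm, hterm] using hzeta.summable)
  have hgeom : ∀ t ∈ Ioc (0:ℝ) 1, log t / (1 - t) = -∑' n : ℕ, t ^ n * -log t := by
    intro t ht
    rcases ht.2.eq_or_lt with rfl | ht1
    · simp
    rw [tsum_mul_right, tsum_geometric_of_lt_one ht.1.le ht1]
    ring
  calc K 1 = -∫ t, ∑' n : ℕ, t ^ n * -log t ∂μ := by
        rw [K, integral_of_le zero_le_one, setIntegral_congr_fun measurableSet_Ioc hgeom,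
          MeasureTheory.integral_neg]
    _ = -∑' n : ℕ, 1 / ((n : ℝ) + 1) ^ 2 := by rw [← hsum]; simp only [hterm]
    _ = -(π ^ 2 / 6) := by rw [hzeta.tsum_eq]

/-- Euler's reflection formula `Li₂ a + Li₂ (1 - a) = π² / 6 - log a log (1 - a)`. -/
lemma K_add_K_one_sub {a : ℝ} (ha : a ∈ Icc 0 1) :
    K a + K (1 - a) + log a * log (1 - a) = -(π ^ 2 / 6) := by
  let F : ℝ → ℝ := fun x ↦ K x + K (1 - x) + log x * log (1 - x)
  have hF0 : F 0 = -(π ^ 2 / 6) := by simp [F, K_zero, K_one]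
  have hKsymm : ContinuousOn (fun x ↦ K (1 - x)) (Icc 0 1) :=
    continuousOn_K.comp (by fun_prop) fun x hx ↦ ⟨by linarith [hx.2], by linarith [hx.1]⟩
  rcases ha.2.eq_or_lt with rfl | ha1
  · simpa [F, K_zero, add_comm] using hF0
  show F a = _
  rw [← hF0]
  refine eq_of_hasDerivAt_zero_of_continuousOn ha.1 (fun x hx ↦ ?_) (fun x hx ↦ ?_)
  · have hx1 : x < 1 := hx.2.trans_lt ha1
    refine ((continuousOn_K.add hKsymm) x ⟨hx.1, hx1.le⟩).mono (Icc_subset_Icc_right ha1.le)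
      |>.add (ContinuousAt.continuousWithinAt ?_)
    rcases hx.1.eq_or_lt with rfl | hx0
    · exact continuousAt_log_mul_log_one_sub
    · exact (continuousAt_log hx0.ne').mul
        ((continuousAt_log (sub_pos.2 hx1).ne').comp (by fun_prop))
  · have hx' : x ∈ Ioo 0 1 := ⟨hx.1, hx.2.trans ha1⟩
    have h1x : 1 - x ∈ Ioo 0 1 := ⟨sub_pos.2 hx'.2, by linarith [hx'.1]⟩
    have hlog1x : HasDerivAt (fun x ↦ log (1 - x)) (-1 / (1 - x)) x := by
      simpa using ((hasDerivAt_id x).const_sub 1).log h1x.1.ne'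
    refine (((hasDerivAt_K hx').add ((hasDerivAt_K h1x).comp_const_sub 1 x)).add
      ((hasDerivAt_log hx'.1.ne').mul hlog1x)).congr_deriv ?_
    field_simp [hx'.1.ne', h1x.1.ne']
    ring

lemma integral_log_div_one_add_of_neg {c : ℝ} :
    ∫ x in -c..0, log x / (1 + x) = K c := by
  have h := integral_comp_neg (a := 0) (b := c) fun x : ℝ ↦ log x / (1 + x)
  simp only [neg_zero, log_neg_eq_log, ← sub_eq_add_neg] at h
  exact h.symm

lemma integral_log_div_one_add_of_pos {b : ℝ} (hb : 0 ≤ b) :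
    ∫ x in (0:ℝ)..b, log x / (1 + x) = K (b / (1 + b)) + log (1 + b) ^ 2 / 2 := by
  let W : ℝ → ℝ := fun c ↦
    (∫ x in (0:ℝ)..c, log x / (1 + x)) - K (c / (1 + c)) - log (1 + c) ^ 2 / 2
  have hW0 : W 0 = 0 := by simp [W, K_zero]
  suffices W b = W 0 by simp only [W, hW0] at this ⊢; linarith
  refine eq_of_hasDerivAt_zero_of_continuousOn hb ?_ fun c hc ↦ ?_
  · have hprim : ContinuousOn (fun c ↦ ∫ x in (0:ℝ)..c, log x / (1 + x)) (Icc 0 b) := by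
      simpa [uIcc_of_le hb] using continuousOn_primitive_interval'
        (intervalIntegrable_log_div_one_add (a := 0) (b := b) (by norm_num) (by linarith))
        left_mem_uIcc
    have hK : ContinuousOn (fun c ↦ K (c / (1 + c))) (Icc 0 b) := by
      refine continuousOn_K.comp (ContinuousOn.div (by fun_prop) (by fun_prop)
        fun c hc ↦ by linarith [hc.1]) fun c hc ↦ ⟨by have := hc.1; positivity, ?_⟩
      rw [div_le_one (by linarith [hc.1])]
      linarith
    have hlog : ContinuousOn (fun c ↦ log (1 + c) ^ 2 / 2) (Icc 0 b) :=
      ContinuousOn.div_const (ContinuousOn.pow (ContinuousOn.log (by fun_prop)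
        fun c hc ↦ by linarith [hc.1]) 2) 2
    exact (hprim.sub hK).sub hlog
  · have hc0 : 0 < c := hc.1
    have h1c : 0 < 1 + c := by linarith
    have hmeas : Measurable fun x : ℝ ↦ log x / (1 + x) := by fun_prop
    have hprim : HasDerivAt (fun c ↦ ∫ x in (0:ℝ)..c, log x / (1 + x)) (log c / (1 + c)) c :=
      integral_hasDerivAt_right (intervalIntegrable_log_div_one_add (by norm_num) (by linarith))
        hmeas.aestronglyMeasurable.stronglyMeasurableAtFilter
        ((continuousAt_log hc0.ne').div (by fun_prop) h1c.ne')
    have hu : c / (1 + c) ∈ Ioo 0 1 := ⟨by positivity, by rw [div_lt_one h1c]; linarith⟩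
    have hK := (hasDerivAt_K hu).comp c
      ((hasDerivAt_id c).div ((hasDerivAt_id c).const_add 1) h1c.ne')
    have hlog := (((hasDerivAt_id c).const_add 1).log h1c.ne').pow 2 |>.div_const 2
    refine ((hprim.sub hK).sub hlog).congr_deriv ?_
    have h1u : 1 - c / (1 + c) = (1 + c)⁻¹ := by field_simp; ring
    simp only [id, h1u, log_div hc0.ne' h1c.ne']
    field_simp
    ring

lemma integral_log_div_one_add {b : ℝ} (hb : 0 < b) :
    ∫ x in -(1 + b)⁻¹..b, log x / (1 + x) =
      -(π ^ 2 / 6) + log b * log (1 + b) - log (1 + b) ^ 2 / 2 := by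
  have h1b : 0 < 1 + b := by linarith
  have hinv : -1 < -(1 + b)⁻¹ := by
    rw [neg_lt_neg_iff, inv_lt_one₀ h1b]; linarith
  have hu : b / (1 + b) ∈ Icc 0 1 := ⟨by positivity, by rw [div_le_one h1b]; linarith⟩
  have h1u : 1 - b / (1 + b) = (1 + b)⁻¹ := by field_simp; ring
  have hreflect := K_add_K_one_sub hu
  rw [h1u, log_div hb.ne' h1b.ne', log_inv] at hreflect
  rw [← integral_add_adjacent_intervals (b := 0)
      (intervalIntegrable_log_div_one_add hinv (by norm_num))
      (intervalIntegrable_log_div_one_add (by norm_num) (by linarith)),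
    integral_log_div_one_add_of_neg, integral_log_div_one_add_of_pos hb.le]
  linear_combination hreflect

end Dilog

open scoped goldenRatio in
/-- The entropy integral at α = G equals −π²/(18 log G). -/
theorem stmt11 :
    ∫ x in ((Real.sqrt 5 + 1)/2 - 2)..((Real.sqrt 5 + 1)/2),
        Real.log |x| * hG x =
      -(Real.pi^2) / (18 * Real.log ((Real.sqrt 5 + 1)/2)) := by
  have hφ : (√5 + 1) / 2 = φ := by rw [goldenRatio, add_comm]
  have hφsq : 1 + φ = φ ^ 2 := by rw [goldenRatio_sq, add_comm]
  have hlower : φ - 2 = -(1 + φ)⁻¹ := by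
    rw [eq_neg_iff_add_eq_zero]
    field_simp
    linear_combination 4 * goldenRatio_sq
  have hthreshold : (1 - φ) / φ = φ - 2 := by
    field_simp
    linear_combination -4 * goldenRatio_sq
  have hintegrand :
      ∀ x ∈ uIcc (φ - 2) φ, log |x| * hG x = (3 * log φ)⁻¹ * (log x / (1 + x)) := by
    intro x hx
    rw [uIcc_of_le (by linarith)] at hx
    simp only [hG, hφ, hthreshold, if_neg (not_lt.2 hx.1), log_abs]
    ring
  have hlogφ : log φ ≠ 0 := (log_pos one_lt_goldenRatio).ne'
  rw [hφ, integral_congr hintegrand, intervalIntegral.integral_const_mul, hlower,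
    Dilog.integral_log_div_one_add goldenRatio_pos, hφsq, log_pow]
  field_simp
  ring
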